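/- Let c be an admissible coefficient function satisfying (Cubic values). Let i_1, i_2, i_3 ∈ {1,2,3} be pairwise distinct and let γ ∈ ℤ^{μ_A−2} be non-negative with |γ| = 4 and γ − e_{i_1,j_1} − e_{i_2,j_2} − e_{i_3,j_3} ≥ 0. If a_{i_1} ≥ 3 and j_1 ≥ 2, then c(γ,0) = 0. -/

import Mathlib

/- Common framework: Frobenius manifolds for orbifold projective lines ℙ¹_A,
   following Ishibashi–Shiraishi–Takahashi. -/

namespace FrobeniusUniqueness

/-- A point index `(i, j)` labelling a flat coordinate `t_{i,j}`. -/
abbrev Pt : Type := Fin 3 × ℕ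

/-- A non-negative element of `ℤ^{μ_A − 2}`: an exponent vector `α` with `α_{i,j} ∈ ℕ`. -/
abbrev Expv : Type := Pt →₀ ℕ

/-- The standard basis vector `e_{i,j}`. -/
noncomputable def e (i : Fin 3) (j : ℕ) : Expv := Finsupp.single (i, j) 1

/-- The length `|α|` of an exponent vector. -/
def len (α : Expv) : ℕ := α.sum fun _ n => n

/-- A point index `(i,j)` is valid if `1 ≤ j ≤ a_i − 1`. -/
def ValidPt (A : Fin 3 → ℕ) (p : Pt) : Prop := 1 ≤ p.2 ∧ p.2 ≤ A p.1 - 1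

/-- An exponent vector lies in `ℤ^{μ_A − 2}` iff it is supported on valid indices. -/
def Valid (A : Fin 3 → ℕ) (α : Expv) : Prop := ∀ p ∈ α.support, ValidPt A p

/-- The combinatorial factor `s_{a,b,c}`. -/
def sFactor (a b c : ℕ) : ℂ :=
  if a = b ∧ b = c then 6
  else if a ≠ b ∧ b ≠ c ∧ a ≠ c then 1
  else 2

/-- The index type for the flat coordinates `t_1`, `t_{i,j}`, `t_{μ_A}`. -/
inductive Idx : Type where
  | one : Idx
  | pt : Fin 3 → ℕ → Idx
  | mu : Idx
deriving DecidableEq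

/-- Validity of a flat coordinate index. -/
def ValidIdx (A : Fin 3 → ℕ) : Idx → Prop
  | .one => True
  | .pt i j => ValidPt A (i, j)
  | .mu => True

/-- The metric `η` in the frame `∂_1, ∂_{i,j}, ∂_{μ_A}`. -/
noncomputable def eta (A : Fin 3 → ℕ) : Idx → Idx → ℂ
  | .one, .mu => 1
  | .mu, .one => 1
  | .pt i j, .pt i' j' =>
      if i = i' ∧ j + j' = A i ∧ 1 ≤ j ∧ j ≤ A i - 1 then (A i : ℂ)⁻¹ else 0
  | _, _ => 0

/-- The point indices occurring in an `Idx`. -/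
def ptsOf : Idx → List Pt
  | .pt i j => [(i, j)]
  | _ => []

/-- The number of occurrences of `μ_A` in an `Idx`. -/
def muCount : Idx → ℕ
  | .mu => 1
  | _ => 0

/-- The factor produced when the monomial `t^{β + Σ_{p ∈ ps} e_p}` is differentiated by
`∏_{p ∈ ps} ∂_p`, leaving the monomial `t^β`. -/
noncomputable def dfac (β : Expv) : List Pt → ℕ
  | [] => 1
  | p :: ps =>
      ((β + ((ps.map fun q => (Finsupp.single q 1 : Expv)).sum) + Finsupp.single p 1 : Expv) p)
        * dfac β ps

/-- `der A c a b d β m` is the coefficient of `t^β · e^{m·t_{μ_A}}` in `∂_a ∂_b ∂_d F`, where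
`F = (1/2)t_1²t_{μ_A} + (1/2)t_1·Σ_{i,j}(1/a_i)t_{i,j}t_{i,a_i−j} + Σ_{α,m} c(α,m)t^α e^{m t_{μ_A}}`
is the potential of the coefficient function `c`.  In particular `∂_1∂_a∂_b F = η(∂_a,∂_b)`. -/
noncomputable def der (A : Fin 3 → ℕ) (c : Expv → ℕ → ℂ) (a b d : Idx) (β : Expv) (m : ℕ) : ℂ :=
  if a = .one then (if β = 0 ∧ m = 0 then eta A b d else 0)
  else if b = .one then (if β = 0 ∧ m = 0 then eta A a d else 0)
  else if d = .one then (if β = 0 ∧ m = 0 then eta A a b else 0)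
  else
    (m : ℂ) ^ (muCount a + muCount b + muCount d) *
      (dfac β (ptsOf a ++ ptsOf b ++ ptsOf d) : ℂ) *
      c (β + (((ptsOf a ++ ptsOf b ++ ptsOf d).map fun q => (Finsupp.single q 1 : Expv)).sum)) m

/-- The coefficient of `t^β · e^{m·t_{μ_A}}` in
`Σ_{σ,τ} ∂_a∂_b∂_σF · η^{στ} · ∂_τ∂_d∂_e F`, where `(η^{στ})` is the inverse matrix of
`(η_{στ})` (so the only nonzero entries are `η^{1,μ_A} = η^{μ_A,1} = 1` and
`η^{(i,j),(i,a_i−j)} = a_i`). -/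
noncomputable def quadTerm (A : Fin 3 → ℕ) (c : Expv → ℕ → ℂ) (a b d e' : Idx)
    (β : Expv) (m : ℕ) : ℂ :=
  ∑ x ∈ Finset.HasAntidiagonal.antidiagonal β, ∑ y ∈ Finset.HasAntidiagonal.antidiagonal m,
    (der A c a b .one x.1 y.1 * der A c .mu d e' x.2 y.2
     + der A c a b .mu x.1 y.1 * der A c .one d e' x.2 y.2
     + ∑ i : Fin 3, ∑ j ∈ Finset.Icc 1 (A i - 1),
         (A i : ℂ) * der A c a b (.pt i j) x.1 y.1 * der A c (.pt i (A i - j)) d e' x.2 y.2)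

/-- `χ_A = 1/a_1 + 1/a_2 + 1/a_3 − 1`. -/
noncomputable def chi (A : Fin 3 → ℕ) : ℚ := (A 0 : ℚ)⁻¹ + (A 1 : ℚ)⁻¹ + (A 2 : ℚ)⁻¹ - 1

/-- The degree of the monomial `t^α`: `Σ_{i,j} α_{i,j}·(a_i − j)/a_i`. -/
noncomputable def deg (A : Fin 3 → ℕ) (α : Expv) : ℚ :=
  α.sum fun p n => (n : ℚ) * (((A p.1 : ℚ) - (p.2 : ℚ)) / (A p.1 : ℚ))

/-- A coefficient function is admissible if it satisfies (Homogeneity) and the WDVV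
equations (coefficientwise, in the variables `t_{i,j}` and `e^{t_{μ_A}}`). -/
structure IsAdmissible (A : Fin 3 → ℕ) (c : Expv → ℕ → ℂ) : Prop where
  homog : ∀ α : Expv, Valid A α → ∀ m : ℕ, c α m ≠ 0 → deg A α + (m : ℚ) * chi A = 2
  wdvv : ∀ a b d e' : Idx, ValidIdx A a → ValidIdx A b → ValidIdx A d → ValidIdx A e' →
      ∀ β : Expv, Valid A β → ∀ m : ℕ,
        quadTerm A c a b d e' β m = quadTerm A c a d b e' β m

/-- (Cubic values). -/
def CubicValues (A : Fin 3 → ℕ) (c : Expv → ℕ → ℂ) : Prop :=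
  (∀ (i₁ i₂ i₃ : Fin 3) (j₁ j₂ j₃ : ℕ),
      ValidPt A (i₁, j₁) → ValidPt A (i₂, j₂) → ValidPt A (i₃, j₃) →
      ¬(i₁ = i₂ ∧ i₂ = i₃) → c (e i₁ j₁ + e i₂ j₂ + e i₃ j₃) 0 = 0) ∧
  (∀ (i : Fin 3) (j₁ j₂ j₃ : ℕ),
      ValidPt A (i, j₁) → ValidPt A (i, j₂) → ValidPt A (i, j₃) →
      sFactor j₁ j₂ j₃ * c (e i j₁ + e i j₂ + e i j₃) 0 =
        if j₁ + j₂ + j₃ = A i then (A i : ℂ)⁻¹ else 0)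

/-- (Normalization). -/
def Normalization (A : Fin 3 → ℕ) (c : Expv → ℕ → ℂ) : Prop :=
  (2 ≤ A 0 → c (e 0 1 + e 1 1 + e 2 1) 1 = 1) ∧
  (A 0 = 1 → A 0 < A 1 → c (e 1 1 + e 2 1) 1 = 1) ∧
  (A 0 = 1 → A 1 = 1 → A 1 < A 2 → c (e 2 1) 1 = 1) ∧
  (A 0 = 1 → A 1 = 1 → A 2 = 1 → c 0 1 = 1)

/-- (Separation). -/
def Separation (A : Fin 3 → ℕ) (c : Expv → ℕ → ℂ) : Prop :=
  ∀ γ : Expv, Valid A γ →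
    ∀ (i₁ i₂ : Fin 3) (j₁ j₂ : ℕ), i₁ ≠ i₂ → ValidPt A (i₁, j₁) → ValidPt A (i₂, j₂) →
      e i₁ j₁ + e i₂ j₂ ≤ γ → c γ 0 = 0

/-- The automorphism of `ℤ^{μ_A−2}` exchanging `e_{i₁,j}` and `e_{i₂,j}` for all `j`. -/
def swapExp (i₁ i₂ : Fin 3) (α : Expv) : Expv :=
  Finsupp.equivMapDomain ((Equiv.swap i₁ i₂).prodCongr (Equiv.refl ℕ)) α

/-- (Symmetry). -/
def Symmetry (A : Fin 3 → ℕ) (c : Expv → ℕ → ℂ) : Prop :=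
  ∀ i₁ i₂ : Fin 3, A i₁ = A i₂ → ∀ α : Expv, Valid A α → ∀ m : ℕ,
    c (swapExp i₁ i₂ α) m = c α m

/-! Compare the two sides of the WDVV equation for
`(∂_{i₂,j₂}, ∂_{i₃,j₃}, ∂_{i₁,1}, ∂_{i₁,j₁-1})` at the monomial `t^β`, where
`β = γ - e_{i₁,j₁} - e_{i₂,j₂} - e_{i₃,j₃}` has length one. Hence each side is a
sum of products of a cubic coefficient and a coefficient of length four. Because `i₁, i₂, i₃`
are pairwise distinct, (Cubic values) kills every product except, on the left,
`a_{i₁} · c(γ,0) · c(e_{i₁,a_{i₁}-j₁} + e_{i₁,1} + e_{i₁,j₁-1}, 0)`, whose cubic factor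
is nonzero since `(a_{i₁} - j₁) + 1 + (j₁ - 1) = a_{i₁}`. -/

open Finset

lemma len_eq_degree (α : Expv) : len α = α.degree := rfl

lemma antidiagonal_eq_pair_of_len_eq_one {β : Expv} (hβ : len β = 1) :
    antidiagonal β = {(0, β), (β, 0)} := by
  ext ⟨x, y⟩
  simp only [HasAntidiagonal.mem_antidiagonal, mem_insert, mem_singleton, Prod.mk.injEq]
  constructor
  · rintro rfl
    rw [len_eq_degree, map_add] at hβ
    rcases Nat.add_eq_one_iff.1 hβ with ⟨hx, -⟩ | ⟨-, hy⟩
    · simp [(Finsupp.degree_eq_zero_iff x).1 hx]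
    · simp [(Finsupp.degree_eq_zero_iff y).1 hy]
  · rintro (⟨rfl, rfl⟩ | ⟨rfl, rfl⟩) <;> simp

lemma Valid.mono {A : Fin 3 → ℕ} {α β : Expv} (hα : Valid A α) (hle : β ≤ α) : Valid A β :=
  fun p hp => hα p (Finsupp.support_mono hle hp)

lemma ValidPt.lt {A : Fin 3 → ℕ} {i : Fin 3} {j : ℕ} (hp : ValidPt A (i, j)) : j < A i := by
  obtain ⟨h1, h2⟩ := hp
  dsimp only at *
  omega

lemma ValidPt.two_le {A : Fin 3 → ℕ} {i : Fin 3} {j : ℕ} (hp : ValidPt A (i, j)) : 2 ≤ A i := by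
  have := hp.lt
  have : 1 ≤ j := hp.1
  omega

lemma ValidPt.dual {A : Fin 3 → ℕ} {i : Fin 3} {j : ℕ} (hp : ValidPt A (i, j)) :
    ValidPt A (i, A i - j) := by
  obtain ⟨h1, h2⟩ := hp
  constructor <;> dsimp only at * <;> omega

lemma ValidPt.one {A : Fin 3 → ℕ} {i : Fin 3} {j : ℕ} (hp : ValidPt A (i, j)) :
    ValidPt A (i, 1) := by
  obtain ⟨h1, h2⟩ := hp
  exact ⟨le_rfl, by dsimp only at *; omega⟩

lemma ValidPt.pred {A : Fin 3 → ℕ} {i : Fin 3} {j : ℕ} (hp : ValidPt A (i, j)) (hj : 2 ≤ j) :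
    ValidPt A (i, j - 1) := by
  obtain ⟨h1, h2⟩ := hp
  constructor <;> dsimp only at * <;> omega

lemma dfac_ne_zero (β : Expv) : ∀ ps : List Pt, dfac β ps ≠ 0
  | [] => one_ne_zero
  | p :: ps => Nat.mul_ne_zero (by simp) (dfac_ne_zero β ps)

section Derivatives

variable {A : Fin 3 → ℕ} {c : Expv → ℕ → ℂ}

lemma der_pt_pt_pt_zero (i₁ i₂ i₃ : Fin 3) (j₁ j₂ j₃ : ℕ) (β : Expv) :
    der A c (.pt i₁ j₁) (.pt i₂ j₂) (.pt i₃ j₃) β 0 =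
      dfac β [(i₁, j₁), (i₂, j₂), (i₃, j₃)] * c (β + (e i₁ j₁ + e i₂ j₂ + e i₃ j₃)) 0 := by
  simp [der, ptsOf, muCount, e, add_assoc]

lemma der_pt_pt_pt_zero_eq_zero_iff (i₁ i₂ i₃ : Fin 3) (j₁ j₂ j₃ : ℕ) (β : Expv) :
    der A c (.pt i₁ j₁) (.pt i₂ j₂) (.pt i₃ j₃) β 0 = 0 ↔
      c (β + (e i₁ j₁ + e i₂ j₂ + e i₃ j₃)) 0 = 0 := by
  rw [der_pt_pt_pt_zero, mul_eq_zero, Nat.cast_eq_zero, or_iff_right (dfac_ne_zero _ _)]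

lemma CubicValues.der_pt_pt_pt_ne_zero_iff (hcub : CubicValues A c) {i₁ i₂ i₃ : Fin 3}
    {j₁ j₂ j₃ : ℕ} (hv₁ : ValidPt A (i₁, j₁)) (hv₂ : ValidPt A (i₂, j₂))
    (hv₃ : ValidPt A (i₃, j₃)) :
    der A c (.pt i₁ j₁) (.pt i₂ j₂) (.pt i₃ j₃) 0 0 ≠ 0 ↔
      i₁ = i₂ ∧ i₂ = i₃ ∧ j₁ + j₂ + j₃ = A i₁ := by
  rw [ne_eq, der_pt_pt_pt_zero_eq_zero_iff, zero_add]
  by_cases hi : i₁ = i₂ ∧ i₂ = i₃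
  · obtain ⟨rfl, rfl⟩ := hi
    have hval := hcub.2 i₁ j₁ j₂ j₃ hv₁ hv₂ hv₃
    have hs : sFactor j₁ j₂ j₃ ≠ 0 := by unfold sFactor; split_ifs <;> norm_num
    have hA : (A i₁ : ℂ)⁻¹ ≠ 0 := by simpa using (by have := hv₁.two_le; omega : A i₁ ≠ 0)
    split_ifs at hval with hj
    · simp only [true_and, hj, iff_true]
      rintro h0
      rw [h0, mul_zero] at hval
      exact hA hval.symm
    · simp only [hj, and_false, iff_false, not_not]
      exact (mul_eq_zero.1 hval).resolve_left hs
  · simp only [hcub.1 i₁ i₂ i₃ j₁ j₂ j₃ hv₁ hv₂ hv₃ hi, not_true_eq_false, false_iff]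
    tauto

lemma CubicValues.der_pt_pt_pt_eq_zero (hcub : CubicValues A c) {i₁ i₂ i₃ : Fin 3}
    {j₁ j₂ j₃ : ℕ} (hv₁ : ValidPt A (i₁, j₁)) (hv₂ : ValidPt A (i₂, j₂))
    (hv₃ : ValidPt A (i₃, j₃)) (h : ¬(i₁ = i₂ ∧ i₂ = i₃ ∧ j₁ + j₂ + j₃ = A i₁)) :
    der A c (.pt i₁ j₁) (.pt i₂ j₂) (.pt i₃ j₃) 0 0 = 0 :=
  not_not.1 (mt (hcub.der_pt_pt_pt_ne_zero_iff hv₁ hv₂ hv₃).1 h)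

end Derivatives

section Contraction

variable (A : Fin 3 → ℕ) (c : Expv → ℕ → ℂ)

/-- The part of `Σ_{σ,τ} ∂_p∂_q∂_σF · η^{στ} · ∂_τ∂_r∂_s F` contributed by `σ = (i,j)`,
`τ = (i, a_i - j)`, at the monomial `t^x · t^y` and `m = 0`. -/
noncomputable def ptContraction (p q r s : Idx) (x y : Expv) : ℂ :=
  ∑ i : Fin 3, ∑ j ∈ Icc 1 (A i - 1),
    (A i : ℂ) * der A c p q (.pt i j) x 0 * der A c (.pt i (A i - j)) r s y 0

/-- At `m = 0` the terms of the WDVV contraction through `t_1` and `t_{μ_A}` vanish, because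
the `t_{μ_A}`-derivative of a coefficient of `e^{0·t_{μ_A}}` is zero. -/
lemma quadTerm_pt_zero (i₁ i₂ i₃ i₄ : Fin 3) (j₁ j₂ j₃ j₄ : ℕ) (β : Expv) :
    quadTerm A c (.pt i₁ j₁) (.pt i₂ j₂) (.pt i₃ j₃) (.pt i₄ j₄) β 0 =
      ∑ x ∈ antidiagonal β,
        ptContraction A c (.pt i₁ j₁) (.pt i₂ j₂) (.pt i₃ j₃) (.pt i₄ j₄) x.1 x.2 := by
  simp [quadTerm, ptContraction, der, ptsOf, muCount]

variable {A c}

lemma quadTerm_pt_zero_of_len_eq_one {i₁ i₂ i₃ i₄ : Fin 3} {j₁ j₂ j₃ j₄ : ℕ} {β : Expv}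
    (hβ : len β = 1) :
    quadTerm A c (.pt i₁ j₁) (.pt i₂ j₂) (.pt i₃ j₃) (.pt i₄ j₄) β 0 =
      ptContraction A c (.pt i₁ j₁) (.pt i₂ j₂) (.pt i₃ j₃) (.pt i₄ j₄) 0 β +
        ptContraction A c (.pt i₁ j₁) (.pt i₂ j₂) (.pt i₃ j₃) (.pt i₄ j₄) β 0 := by
  have hβ0 : β ≠ 0 := by rintro rfl; simp [len_eq_degree] at hβ
  rw [quadTerm_pt_zero, antidiagonal_eq_pair_of_len_eq_one hβ,
    sum_pair fun h => hβ0 (congrArg Prod.snd h)]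

lemma ptContraction_eq_zero_of_left {p q r s : Idx} {x y : Expv}
    (h : ∀ i j, ValidPt A (i, j) → der A c p q (.pt i j) x 0 = 0) :
    ptContraction A c p q r s x y = 0 :=
  sum_eq_zero fun i _ => sum_eq_zero fun j hj => by
    rw [h i j (mem_Icc.1 hj), mul_zero, zero_mul]

lemma ptContraction_eq_zero_of_right {p q r s : Idx} {x y : Expv}
    (h : ∀ i j, ValidPt A (i, j) → der A c (.pt i j) r s y 0 = 0) :
    ptContraction A c p q r s x y = 0 :=
  sum_eq_zero fun i _ => sum_eq_zero fun j hj => by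
    rw [h i (A i - j) (ValidPt.dual (mem_Icc.1 hj)), mul_zero]

lemma ptContraction_eq_single {p q r s : Idx} {x y : Expv} {i₀ : Fin 3} {j₀ : ℕ}
    (hv₀ : ValidPt A (i₀, j₀))
    (h : ∀ i j, ValidPt A (i, j) → (i, j) ≠ (i₀, A i₀ - j₀) → der A c (.pt i j) r s y 0 = 0) :
    ptContraction A c p q r s x y =
      A i₀ * der A c p q (.pt i₀ j₀) x 0 * der A c (.pt i₀ (A i₀ - j₀)) r s y 0 := by
  have hj₀ : j₀ ∈ Icc 1 (A i₀ - 1) := mem_Icc.2 hv₀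
  rw [ptContraction, sum_eq_single_of_mem i₀ (mem_univ _), sum_eq_single_of_mem j₀ hj₀]
  · intro j hj hne
    obtain ⟨hj1, hj2⟩ := mem_Icc.1 hj
    obtain ⟨hj₀1, hj₀2⟩ := hv₀
    have hdual : A i₀ - j ≠ A i₀ - j₀ := by omega
    rw [h i₀ (A i₀ - j) (ValidPt.dual ⟨hj1, hj2⟩) (by simpa using hdual), mul_zero]
  · intro i _ hne
    refine sum_eq_zero fun j hj => ?_
    rw [h i (A i - j) (ValidPt.dual (mem_Icc.1 hj)) (by simp [hne]), mul_zero]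

end Contraction

section WDVV

variable {A : Fin 3 → ℕ} {c : Expv → ℕ → ℂ} {i₁ i₂ i₃ : Fin 3} {j₂ j₃ k l : ℕ} {β : Expv}

lemma quadTerm_eq_mul_der_of_len_eq_one (hcub : CubicValues A c) (h23 : i₂ ≠ i₃)
    (hv₂ : ValidPt A (i₂, j₂)) (hv₃ : ValidPt A (i₃, j₃)) (hvk : ValidPt A (i₁, k))
    (hvl : ValidPt A (i₁, l)) (hvkl : ValidPt A (i₁, k + l)) (hβ : len β = 1) :
    quadTerm A c (.pt i₂ j₂) (.pt i₃ j₃) (.pt i₁ k) (.pt i₁ l) β 0 =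
      A i₁ * der A c (.pt i₂ j₂) (.pt i₃ j₃) (.pt i₁ (k + l)) β 0 *
        der A c (.pt i₁ (A i₁ - (k + l))) (.pt i₁ k) (.pt i₁ l) 0 0 := by
  have h₀ : ptContraction A c (.pt i₂ j₂) (.pt i₃ j₃) (.pt i₁ k) (.pt i₁ l) 0 β = 0 :=
    ptContraction_eq_zero_of_left fun i j hv =>
      hcub.der_pt_pt_pt_eq_zero hv₂ hv₃ hv fun h => h23 h.1
  have h₁ := ptContraction_eq_single (p := .pt i₂ j₂) (q := .pt i₃ j₃) (x := β) hvkl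
    fun i j hv hne => hcub.der_pt_pt_pt_eq_zero hv hvk hvl fun ⟨hi, _, hsum⟩ => hne <| by
      subst hi
      simp only [Prod.mk.injEq, true_and]
      omega
  rw [quadTerm_pt_zero_of_len_eq_one hβ, h₀, h₁, zero_add]

lemma quadTerm_eq_zero_of_len_eq_one (hcub : CubicValues A c) (h12 : i₁ ≠ i₂)
    (h13 : i₁ ≠ i₃) (hv₂ : ValidPt A (i₂, j₂)) (hv₃ : ValidPt A (i₃, j₃))
    (hvk : ValidPt A (i₁, k)) (hvl : ValidPt A (i₁, l)) (hβ : len β = 1) :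
    quadTerm A c (.pt i₂ j₂) (.pt i₁ k) (.pt i₃ j₃) (.pt i₁ l) β 0 = 0 := by
  have h₀ : ptContraction A c (.pt i₂ j₂) (.pt i₁ k) (.pt i₃ j₃) (.pt i₁ l) 0 β = 0 :=
    ptContraction_eq_zero_of_left fun i j hv =>
      hcub.der_pt_pt_pt_eq_zero hv₂ hvk hv fun h => h12 h.1.symm
  have h₁ : ptContraction A c (.pt i₂ j₂) (.pt i₁ k) (.pt i₃ j₃) (.pt i₁ l) β 0 = 0 :=
    ptContraction_eq_zero_of_right fun i j hv =>
      hcub.der_pt_pt_pt_eq_zero hv hv₃ hvl fun h => h13 h.2.1.symm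
  rw [quadTerm_pt_zero_of_len_eq_one hβ, h₀, h₁, add_zero]

end WDVV

theorem step1_i_general (A : Fin 3 → ℕ)
    (c : Expv → ℕ → ℂ) (hadm : IsAdmissible A c) (hcub : CubicValues A c)
    (i₁ i₂ i₃ : Fin 3) (h12 : i₁ ≠ i₂) (h13 : i₁ ≠ i₃) (h23 : i₂ ≠ i₃)
    (j₁ j₂ j₃ : ℕ)
    (hv₁ : ValidPt A (i₁, j₁)) (hv₂ : ValidPt A (i₂, j₂)) (hv₃ : ValidPt A (i₃, j₃))
    (γ : Expv) (hγ : Valid A γ) (hlen : len γ = 4)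
    (hle : e i₁ j₁ + e i₂ j₂ + e i₃ j₃ ≤ γ)
    (hj₁ : 2 ≤ j₁) :
    c γ 0 = 0 := by
  obtain ⟨β, rfl⟩ := exists_add_of_le hle
  have hβ : len β = 1 := by
    simp only [len_eq_degree, map_add, Finsupp.degree_single, e] at hlen ⊢
    omega
  have hj : 1 + (j₁ - 1) = j₁ := by omega
  have hW := hadm.wdvv (.pt i₂ j₂) (.pt i₃ j₃) (.pt i₁ 1) (.pt i₁ (j₁ - 1)) hv₂ hv₃ hv₁.one
    (hv₁.pred hj₁) β (hγ.mono le_add_self) 0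
  rw [quadTerm_eq_mul_der_of_len_eq_one hcub h23 hv₂ hv₃ hv₁.one (hv₁.pred hj₁) (by rwa [hj]) hβ,
    quadTerm_eq_zero_of_len_eq_one hcub h12 h13 hv₂ hv₃ hv₁.one (hv₁.pred hj₁) hβ, hj] at hW
  have hcubic : der A c (.pt i₁ (A i₁ - j₁)) (.pt i₁ 1) (.pt i₁ (j₁ - 1)) 0 0 ≠ 0 :=
    (hcub.der_pt_pt_pt_ne_zero_iff hv₁.dual hv₁.one (hv₁.pred hj₁)).2
      ⟨rfl, rfl, by have := hv₁.lt; omega⟩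
  have hder : der A c (.pt i₂ j₂) (.pt i₃ j₃) (.pt i₁ j₁) β 0 = 0 := by
    have hA : A i₁ ≠ 0 := by have := hv₁.two_le; omega
    simpa [hcubic, hA] using hW
  rw [der_pt_pt_pt_zero_eq_zero_iff] at hder
  convert hder using 2
  abel

/-- Sub-Lemma (Step 1-(i)). -/
theorem step1_i (A : Fin 3 → ℕ) (hA : ∀ i, 1 ≤ A i) (hA01 : A 0 ≤ A 1) (hA12 : A 1 ≤ A 2)
    (c : Expv → ℕ → ℂ) (hadm : IsAdmissible A c) (hcub : CubicValues A c)
    (i₁ i₂ i₃ : Fin 3) (h12 : i₁ ≠ i₂) (h13 : i₁ ≠ i₃) (h23 : i₂ ≠ i₃)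
    (j₁ j₂ j₃ : ℕ)
    (hv₁ : ValidPt A (i₁, j₁)) (hv₂ : ValidPt A (i₂, j₂)) (hv₃ : ValidPt A (i₃, j₃))
    (γ : Expv) (hγ : Valid A γ) (hlen : len γ = 4)
    (hle : e i₁ j₁ + e i₂ j₂ + e i₃ j₃ ≤ γ)
    (ha : 3 ≤ A i₁) (hj₁ : 2 ≤ j₁) :
    c γ 0 = 0 :=
  step1_i_general A c hadm hcub i₁ i₂ i₃ h12 h13 h23 j₁ j₂ j₃ hv₁ hv₂ hv₃ γ hγ hlen hle hj₁

end FrobeniusUniqueness
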